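/- The two constructions between action operads and bilateral cloning systems are mutually inverse on the partial compositions: starting from an action operad (G_•, π, {∘_i}, id), defining κ_i^n(g) = g ∘_i e_2, ι_n(g) = e_2 ∘_1 g, ζ_n(g) = e_2 ∘_2 g, and then forming f ⊛_i g := κ_i^n(m)(f)·ν_i^m(n)(g), one recovers f ⊛_i g = f ∘_i g for all f ∈ G_n, g ∈ G_m, 1 ≤ i ≤ n. -/

import Mathlib

/-- Block insertion for (underlying functions of) permutations: `f ∘_i g`, where the
`i`-th strand of `f : Fin (n+1) → Fin (n+1)` is replaced by the block `g`. -/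
def blockComp {n m : ℕ} (f : Fin (n+1) → Fin (n+1)) (i : Fin (n+1))
    (g : Fin (m+1) → Fin (m+1)) (k : Fin (n+m+1)) : Fin (n+m+1) :=
  if h1 : (k : ℕ) < (i : ℕ) then
    let b : Fin (n+1) := ⟨(k : ℕ), by have := i.isLt; omega⟩
    ⟨(f b : ℕ) + (if (f i : ℕ) < (f b : ℕ) then m else 0),
      by have := (f b).isLt; split <;> omega⟩
  else if h2 : (k : ℕ) ≤ (i : ℕ) + m then
    let r : Fin (m+1) := ⟨(k : ℕ) - (i : ℕ), by omega⟩
    ⟨(f i : ℕ) + (g r : ℕ), by have := (f i).isLt; have := (g r).isLt; omega⟩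
  else
    let b : Fin (n+1) := ⟨(k : ℕ) - m, by have := k.isLt; omega⟩
    ⟨(f b : ℕ) + (if (f i : ℕ) < (f b : ℕ) then m else 0),
      by have := (f b).isLt; split <;> omega⟩

/-- An action operad (without constants): a family of groups `G_{n+1}` (`n ≥ 0`) forming a
non-symmetric operad in sets, with an operad map `π` to the symmetric groups which is a
levelwise group homomorphism, satisfying the compatibility of partial compositions with the
group multiplications. -/
structure ActionOperad where
  G : ℕ → GrpCat
  comp : ∀ {n m : ℕ}, G (n+1) → Fin (n+1) → G (m+1) → G (n+m+1)
  unitE : G 1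
  pi : ∀ {n : ℕ}, G (n+1) →* Equiv.Perm (Fin (n+1))
  comp_unit : ∀ {n : ℕ} (f : G (n+1)) (i : Fin (n+1)), comp f i unitE = f
  unit_comp : ∀ {m : ℕ} (g : G (m+1)), HEq (comp unitE ⟨0, by omega⟩ g) g
  assoc_lt : ∀ {n m l : ℕ} (f : G (n+1)) (g : G (m+1)) (h : G (l+1)) (i : Fin (n+1))
    (j : Fin (n+m+1)) (hj : (j : ℕ) < (i : ℕ)),
    HEq (comp (comp f i g) j h)
      (comp (comp f ⟨(j : ℕ), by have := i.isLt; omega⟩ h)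
        ⟨(i : ℕ) + l, by have := i.isLt; omega⟩ g)
  assoc_ge : ∀ {n m l : ℕ} (f : G (n+1)) (g : G (m+1)) (h : G (l+1)) (i : Fin (n+1))
    (j : Fin (n+m+1)) (hj : (i : ℕ) + m < (j : ℕ)),
    HEq (comp (comp f i g) j h)
      (comp (comp f ⟨(j : ℕ) - m, by have := j.isLt; omega⟩ h)
        ⟨(i : ℕ), by have := i.isLt; omega⟩ g)
  assoc_nest : ∀ {n m l : ℕ} (f : G (n+1)) (g : G (m+1)) (h : G (l+1)) (i : Fin (n+1))
    (j : Fin (n+m+1)) (h1 : (i : ℕ) ≤ (j : ℕ)) (h2 : (j : ℕ) ≤ (i : ℕ) + m),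
    HEq (comp (comp f i g) j h) (comp f i (comp g ⟨(j : ℕ) - (i : ℕ), by omega⟩ h))
  pi_comp : ∀ {n m : ℕ} (f : G (n+1)) (i : Fin (n+1)) (g : G (m+1)),
    ⇑(pi (comp f i g)) = blockComp ⇑(pi f) i ⇑(pi g)
  prod_rule : ∀ {n m : ℕ} (f f' : G (n+1)) (g g' : G (m+1)) (i : Fin (n+1)),
    comp (f * f') i (g * g') = comp f ((pi f') i) g * comp f' i g'

/-- Transport an element of `G a` along an equality of arities. -/
def ActionOperad.gcast (A : ActionOperad) {a b : ℕ} (h : a = b) (x : A.G a) : A.G b := by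
  subst h; exact x

/-- Iterated cloning `κ_i^n(m)`: `s` applications of `κ_i(g) = g ∘_i e_2`. -/
def ActionOperad.kIter (A : ActionOperad) {n : ℕ} (i : Fin (n+1)) :
    (s : ℕ) → A.G (n+1) → A.G (n+s+1)
  | 0, f => f
  | s+1, f =>
    A.comp (n := n + s) (m := 1) (A.kIter i s f) (Fin.castLE (by omega) i) (1 : A.G (1+1))

/-- Iterated `ι`: `r` applications of `ι(g) = e_2 ∘_1 g`. -/
def ActionOperad.iIter (A : ActionOperad) {n : ℕ} : (r : ℕ) → A.G (n+1) → A.G (n+r+1)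
  | 0, g => g
  | r+1, g => A.gcast (by omega) (A.comp (1 : A.G (1+1)) ⟨0, by omega⟩ (A.iIter r g))

/-- Iterated `ζ`: `r` applications of `ζ(g) = e_2 ∘_2 g`. -/
def ActionOperad.zIter (A : ActionOperad) {n : ℕ} : (r : ℕ) → A.G (n+1) → A.G (n+r+1)
  | 0, g => g
  | r+1, g => A.gcast (by omega) (A.comp (1 : A.G (1+1)) ⟨1, by omega⟩ (A.zIter r g))

/-- `ν_j^m(n)`: pad with `a` strands on the left (via `ζ`) and `b` strands on the right
(via `ι`). -/
def ActionOperad.nuIter (A : ActionOperad) {m : ℕ} (a b : ℕ) (h : A.G (m+1)) :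
    A.G (m+a+b+1) :=
  A.iIter b (A.zIter a h)


namespace ActionOperad

variable (A : ActionOperad)

lemma gcast_heq {a b : ℕ} (h : a = b) (x : A.G a) : HEq (A.gcast h x) x := by
  subst h; rfl

lemma gcast_eq_of_heq {a b : ℕ} (h : a = b) (x : A.G a) (y : A.G b)
    (hxy : HEq x y) : A.gcast h x = y := by
  subst h; exact eq_of_heq hxy

lemma one_heq {a b : ℕ} (h : a = b) : HEq (1 : A.G (a+1)) (1 : A.G (b+1)) := by
  subst h; rfl

lemma comp_congr {n n' m m' : ℕ} (hn : n = n') (hm : m = m')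
    {f : A.G (n+1)} {f' : A.G (n'+1)} {i : Fin (n+1)} {i' : Fin (n'+1)}
    {g : A.G (m+1)} {g' : A.G (m'+1)}
    (hf : HEq f f') (hi : (i : ℕ) = (i' : ℕ)) (hg : HEq g g') :
    HEq (A.comp f i g) (A.comp f' i' g') := by
  subst hn; subst hm
  rw [eq_of_heq hf, eq_of_heq hg, Fin.ext hi]

lemma unitE_eq_one : A.unitE = (1 : A.G 1) := by
  have h0 : A.comp A.unitE (⟨0, by omega⟩ : Fin 1) (1 : A.G (0+1)) = 1 :=
    eq_of_heq (A.unit_comp (1 : A.G (0+1)))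
  have h1 : A.comp A.unitE (⟨0, by omega⟩ : Fin 1) A.unitE = A.unitE :=
    A.comp_unit A.unitE ⟨0, by omega⟩
  have hp := A.prod_rule (n := 0) (m := 0) A.unitE A.unitE (1 : A.G 1) A.unitE
    ⟨0, by omega⟩
  have hsub : (A.pi A.unitE) ⟨0, by omega⟩ = (⟨0, by omega⟩ : Fin 1) :=
    Fin.ext (by omega)
  rw [one_mul, hsub, h0, h1, one_mul] at hp
  have h2 : A.comp (A.unitE * A.unitE) (⟨0, by omega⟩ : Fin 1) A.unitE
      = A.unitE * A.unitE := A.comp_unit _ _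
  rw [h2] at hp
  exact mul_eq_left.mp hp

lemma one_comp_one {n m : ℕ} (i : Fin (n+1)) :
    A.comp (1 : A.G (n+1)) i (1 : A.G (m+1)) = 1 := by
  have hp := A.prod_rule (1 : A.G (n+1)) 1 (1 : A.G (m+1)) 1 i
  rw [mul_one, mul_one, map_one] at hp
  have : ((1 : Equiv.Perm (Fin (n+1))) i) = i := rfl
  rw [this] at hp
  exact (left_eq_mul.mp hp)

lemma one_comp_heq {m : ℕ} (g : A.G (m+1)) :
    HEq (A.comp (1 : A.G (0+1)) (⟨0, by omega⟩ : Fin 1) g) g := by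
  rw [← A.unitE_eq_one]; exact A.unit_comp g

lemma kIter_eq {n : ℕ} (i : Fin (n+1)) (f : A.G (n+1)) :
    ∀ s : ℕ, A.kIter i s f = A.comp f i (1 : A.G (s+1))
  | 0 => by
    show f = A.comp f i (1 : A.G (0+1))
    rw [← A.unitE_eq_one, A.comp_unit]
  | s+1 => by
    show A.comp (A.kIter i s f) (Fin.castLE (by omega) i) (1 : A.G (1+1)) = _
    rw [kIter_eq i f s]
    have ha := A.assoc_nest f (1 : A.G (s+1)) (1 : A.G (1+1)) i
      (Fin.castLE (by omega) i) (le_refl _) (by simp)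
    have h1 : A.comp (1 : A.G (s+1))
        (⟨(Fin.castLE (by omega : n+1 ≤ n+s+1) i : ℕ) - (i : ℕ), by simp⟩)
        (1 : A.G (1+1)) = 1 := A.one_comp_one _
    rw [h1] at ha
    exact eq_of_heq ha

lemma zIter_heq {m : ℕ} (g : A.G (m+1)) :
    ∀ a : ℕ, HEq (A.zIter a g) (A.comp (1 : A.G (a+1)) ⟨a, by omega⟩ g)
  | 0 => (A.one_comp_heq g).symm
  | a+1 => by
    show HEq (A.gcast _ (A.comp (1 : A.G (1+1)) ⟨1, by omega⟩ (A.zIter a g))) _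
    refine (A.gcast_heq _ _).trans ?_
    refine HEq.trans (A.comp_congr rfl (by omega : m + a = a + m)
      HEq.rfl rfl (zIter_heq g a)) ?_
    have ha := A.assoc_nest (1 : A.G (1+1)) (1 : A.G (a+1)) g
      (⟨1, by omega⟩ : Fin 2) (⟨a+1, by omega⟩ : Fin (1+a+1))
      (by show (1:ℕ) ≤ a+1; omega) (by show a+1 ≤ 1+a; omega)
    have h1 : A.comp (1 : A.G (1+1)) (⟨1, by omega⟩ : Fin 2) (1 : A.G (a+1)) = 1 :=
      A.one_comp_one _
    rw [h1] at ha
    refine HEq.trans ?_ (ha.symm.trans (A.comp_congr (by omega : 1 + a = a + 1) rfl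
      (A.one_heq (by omega)) (by simp) HEq.rfl))
    exact A.comp_congr rfl rfl HEq.rfl rfl
      (A.comp_congr rfl rfl HEq.rfl (by simp) HEq.rfl)

lemma iIter_heq {k : ℕ} (h' : A.G (k+1)) :
    ∀ b : ℕ, HEq (A.iIter b h') (A.comp (1 : A.G (b+1)) ⟨0, by omega⟩ h')
  | 0 => (A.one_comp_heq h').symm
  | b+1 => by
    show HEq (A.gcast _ (A.comp (1 : A.G (1+1)) ⟨0, by omega⟩ (A.iIter b h'))) _
    refine (A.gcast_heq _ _).trans ?_
    refine HEq.trans (A.comp_congr rfl (by omega : k + b = b + k)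
      HEq.rfl rfl (iIter_heq h' b)) ?_
    have ha := A.assoc_nest (1 : A.G (1+1)) (1 : A.G (b+1)) h'
      (⟨0, by omega⟩ : Fin 2) (⟨0, by omega⟩ : Fin (1+b+1))
      (by show (0:ℕ) ≤ 0; omega) (by show (0:ℕ) ≤ 0+b; omega)
    have h1 : A.comp (1 : A.G (1+1)) (⟨0, by omega⟩ : Fin 2) (1 : A.G (b+1)) = 1 :=
      A.one_comp_one _
    rw [h1] at ha
    refine HEq.trans ?_ (ha.symm.trans
      (A.comp_congr (by omega : 1 + b = b + 1) rfl (A.one_heq (by omega))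
        (by simp) HEq.rfl))
    exact A.comp_congr rfl rfl HEq.rfl rfl
      (A.comp_congr rfl rfl HEq.rfl (by simp) HEq.rfl)

lemma nuIter_heq {m : ℕ} (g : A.G (m+1)) (a b : ℕ) :
    HEq (A.nuIter a b g) (A.comp (1 : A.G (a+b+1)) ⟨a, by omega⟩ g) := by
  unfold nuIter
  refine (A.iIter_heq (A.zIter a g) b).trans ?_
  refine HEq.trans (A.comp_congr rfl (by omega : m + a = a + m)
    HEq.rfl rfl (A.zIter_heq g a)) ?_
  have ha := A.assoc_nest (1 : A.G (b+1)) (1 : A.G (a+1)) g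
    (⟨0, by omega⟩ : Fin (b+1)) (⟨a, by omega⟩ : Fin (b+a+1))
    (by show (0:ℕ) ≤ a; omega) (by show a ≤ 0+a; omega)
  have h1 : A.comp (1 : A.G (b+1)) (⟨0, by omega⟩ : Fin (b+1)) (1 : A.G (a+1)) = 1 :=
    A.one_comp_one _
  rw [h1] at ha
  refine HEq.trans ?_ (ha.symm.trans
    (A.comp_congr (by omega : b + a = a + b) rfl (A.one_heq (by omega))
      (by simp) HEq.rfl))
  exact A.comp_congr rfl rfl HEq.rfl rfl
    (A.comp_congr rfl rfl HEq.rfl (by simp) HEq.rfl)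

end ActionOperad

/-- The two constructions are mutually inverse on partial compositions: forming
`f ⊛_i g := κ_i^n(m)(f) · ν_i^m(n)(g)` from the induced bilateral cloning system of an
action operad recovers `f ∘_i g`. -/
theorem stmt16 (A : ActionOperad) (n m : ℕ) (f : A.G (n+1)) (g : A.G (m+1))
    (i : Fin (n+1)) :
    A.kIter i m f *
        A.gcast (by have := i.isLt; omega) (A.nuIter (i : ℕ) (n - (i : ℕ)) g) =
      A.comp f i g := by
  have hnu : A.gcast (by have := i.isLt; omega)
      (A.nuIter (i : ℕ) (n - (i : ℕ)) g) = A.comp (1 : A.G (n+1)) i g := by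
    refine A.gcast_eq_of_heq _ _ _ ?_
    refine (A.nuIter_heq g (i : ℕ) (n - (i : ℕ))).trans ?_
    exact A.comp_congr (by have := i.isLt; omega) rfl (A.one_heq (by have := i.isLt; omega)) rfl HEq.rfl
  rw [A.kIter_eq, hnu]
  have hp := A.prod_rule f 1 (1 : A.G (m+1)) g i
  rw [mul_one, one_mul, map_one] at hp
  have : ((1 : Equiv.Perm (Fin (n+1))) i) = i := rfl
  rw [this] at hp
  exact hp.symm
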